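/- arXiv:math/0402328 — 3 statements merged into one kernel-verified Lean document; each statement's English description precedes it below -/
import Mathlib

section
/- Let n ≥ 1 and let P ⊆ ℝ^n be a full-dimensional lattice polytope. Suppose k ≥ 0 is an integer such that the dilate kP contains no lattice point in its interior. Then for every integer ℓ with ℓ ≥ max{n − k, 1}, the dilated polytope ℓP is normal; that is, for every integer m ≥ 1, every lattice point of m(ℓP) is a sum of m lattice points of ℓP. (This is the paper's Corollary 1.4, with the hypothesis 'k ≤ d(P)' unwound: d(P) is the largest integer d such that dP has no lattice points in its relative interior.) -/
open Pointwise

/-- The set of lattice points of `ℝ^n`, i.e. points with all coordinates integral. -/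
def latticePts (n : ℕ) : Set (Fin n → ℝ) := {x | ∀ i, ∃ z : ℤ, x i = (z : ℝ)}

/-!
Write a lattice point of `(M + 1)P` as `x = ∑ λᵢ bᵢ` with `λᵢ ≥ 0`, `∑ λᵢ = M + 1`, where the `bᵢ`
form an affine basis of lattice points of `P`. If all `λᵢ < 1`, the reflected point
`∑ bᵢ - x = ∑ (1 - λᵢ) bᵢ` is a lattice point in the interior of `(n - M)P`, and adding a
lattice point of `P` enough times moves it into the interior of `kP`. Hence when `n ≤ M + k` some
`λᵢ ≥ 1`, and `x - bᵢ` is a lattice point of `MP`. Peeling off points of `P` this way, every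
lattice point of `(ℓ + j)P` is a lattice point of `ℓP` plus one of `jP`, which gives normality
of `ℓP` by induction on the number of summands.
-/

open Set Finset

theorem AffineIndependent.exists_subset_affineSpan_eq_top_of_subset {k V P : Type*} [DivisionRing k]
    [AddCommGroup V] [Module k V] [AddTorsor V P] {s t : Set P}
    (hs : AffineIndependent k ((↑) : s → P)) (hne : s.Nonempty) (hst : s ⊆ t)
    (ht : affineSpan k t = ⊤) :
    ∃ u, s ⊆ u ∧ u ⊆ t ∧ AffineIndependent k ((↑) : u → P) ∧ affineSpan k u = ⊤ := by
  obtain ⟨p, hp⟩ := hne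
  rw [affineIndependent_set_iff_linearIndependent_vsub k hp] at hs
  obtain ⟨b, hbt, hsb, htb, hb⟩ := exists_linearIndepOn_id_extension hs
    (image_mono (sdiff_subset_sdiff_left hst) : (· -ᵥ p) '' (s \ {p}) ⊆ (· -ᵥ p) '' (t \ {p}))
  have hspan : Submodule.span k b = ⊤ := by
    refine top_le_iff.1 ((top_le_iff.2 ?_).trans (Submodule.span_le.2 htb))
    rw [← vectorSpan_eq_span_vsub_set_right_ne k (hst hp), ← direction_affineSpan, ht,
      AffineSubspace.direction_top]
  have hb0 : ∀ v ∈ b, v ≠ (0 : V) := fun v hv => hb.ne_zero hv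
  replace hb : LinearIndependent k ((↑) : b → V) := hb
  rw [linearIndependent_set_iff_affineIndependent_vadd_union_singleton k hb0 p] at hb
  refine ⟨{p} ∪ (· +ᵥ p) '' b, ?_, ?_, hb, ?_⟩
  · intro q hq
    rcases eq_or_ne q p with rfl | hqp
    · exact mem_union_left _ rfl
    · exact mem_union_right _ ⟨q -ᵥ p, hsb ⟨q, ⟨hq, hqp⟩, rfl⟩, vsub_vadd q p⟩
  · rintro q (rfl | ⟨v, hv, rfl⟩)
    · exact hst hp
    · obtain ⟨w, ⟨hwt, -⟩, rfl⟩ := hbt hv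
      simpa using hwt
  · exact affineSpan_singleton_union_vadd_eq_top_of_span_eq_top p
      (by rw [Subtype.range_coe]; exact hspan)

theorem exists_affineBasis_subset_of_mem_convexHull {𝕜 E : Type*} [Field 𝕜] [LinearOrder 𝕜]
    [IsStrictOrderedRing 𝕜] [AddCommGroup E] [Module 𝕜 E] {s : Set E}
    (hs : affineSpan 𝕜 s = ⊤) {p : E} (hp : p ∈ convexHull 𝕜 s) :
    ∃ (u : Set E) (b : AffineBasis u 𝕜 E), ⇑b = ((↑) : u → E) ∧ u ⊆ s ∧ p ∈ convexHull 𝕜 u := by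
  rw [convexHull_eq_union] at hp
  obtain ⟨t, hts, ht, hpt⟩ := by simpa only [mem_iUnion, exists_prop] using hp
  obtain ⟨u, htu, hus, hu, hspan⟩ := ht.exists_subset_affineSpan_eq_top_of_subset
    (convexHull_nonempty_iff.1 ⟨p, hpt⟩) hts hs
  exact ⟨u, ⟨(↑), hu, by rw [Subtype.range_coe]; exact hspan⟩, rfl, hus, convexHull_mono htu hpt⟩

theorem Convex.sum_smul_mem_sum_smul {ι E : Type*} [AddCommGroup E] [Module ℝ E] {s : Set E}
    (hs : Convex ℝ s) (hne : s.Nonempty) (t : Finset ι) {w : ι → ℝ} {z : ι → E}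
    (hw : ∀ i ∈ t, 0 ≤ w i) (hz : ∀ i ∈ t, z i ∈ s) :
    ∑ i ∈ t, w i • z i ∈ (∑ i ∈ t, w i) • s := by
  classical
  induction t using Finset.induction_on with
  | empty => simp [Set.zero_smul_set hne]
  | insert a t ha ih =>
    rw [sum_insert ha, sum_insert ha,
      hs.add_smul (hw a (mem_insert_self a t)) (sum_nonneg fun i hi => hw i (mem_insert_of_mem hi))]
    exact add_mem_add (smul_mem_smul_set (hz a (mem_insert_self a t)))
      (ih (fun i hi => hw i (mem_insert_of_mem hi)) fun i hi => hz i (mem_insert_of_mem hi))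

theorem AffineBasis.sum_smul_mem_interior_smul_convexHull {ι E : Type*} [Fintype ι]
    [NormedAddCommGroup E] [NormedSpace ℝ E] (b : AffineBasis ι ℝ E) {g : ι → ℝ}
    (hg : ∀ i, 0 < g i) :
    ∑ i, g i • b i ∈ interior ((∑ i, g i) • convexHull ℝ (range b)) := by
  have := b.nonempty
  have hG : 0 < ∑ i, g i := sum_pos (fun i _ => hg i) univ_nonempty
  have hμ : ∑ i, (∑ j, g j)⁻¹ * g i = 1 := by rw [← mul_sum, inv_mul_cancel₀ hG.ne']
  rw [interior_smul₀ hG.ne', b.interior_convexHull]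
  refine ⟨univ.affineCombination ℝ b fun i => (∑ j, g j)⁻¹ * g i, fun i => ?_, ?_⟩
  · rw [b.coord_apply_combination_of_mem (mem_univ i) hμ]
    exact mul_pos (inv_pos.2 hG) (hg i)
  · rw [univ.affineCombination_eq_linear_combination _ _ hμ]
    simp_rw [smul_sum, smul_smul, ← mul_assoc, mul_inv_cancel₀ hG.ne', one_mul]

theorem convexHull_nonempty_of_affineSpan_eq_top {E : Type*} [AddCommGroup E] [Module ℝ E]
    {s : Set E} (hs : affineSpan ℝ s = ⊤) : (convexHull ℝ s).Nonempty :=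
  convexHull_nonempty_iff.2 (AffineSubspace.nonempty_of_affineSpan_eq_top ℝ _ _ hs)

def latticeAddSubgroup (n : ℕ) : AddSubgroup (Fin n → ℝ) where
  carrier := latticePts n
  add_mem' {x y} hx hy i := by
    obtain ⟨a, ha⟩ := hx i
    obtain ⟨b, hb⟩ := hy i
    exact ⟨a + b, by simp [ha, hb]⟩
  zero_mem' _ := ⟨0, by simp⟩
  neg_mem' {x} hx i := by
    obtain ⟨a, ha⟩ := hx i
    exact ⟨-a, by simp [ha]⟩

def IsHollow {n : ℕ} (P : Set (Fin n → ℝ)) : Prop := ∀ x ∈ interior P, x ∉ latticePts n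

theorem IsHollow.smul_of_le {n h k : ℕ} {P : Set (Fin n → ℝ)} (hk : IsHollow ((k : ℝ) • P))
    (hP : Convex ℝ P) {w : Fin n → ℝ} (hwP : w ∈ P) (hw : w ∈ latticePts n) (hhk : h ≤ k) :
    IsHollow ((h : ℝ) • P) := by
  intro x hx hxlat
  have hsplit : (k : ℝ) • P = (h : ℝ) • P + ((k - h : ℕ) : ℝ) • P := by
    rw [← hP.add_smul h.cast_nonneg (k - h).cast_nonneg, ← Nat.cast_add, Nat.add_sub_cancel' hhk]
  refine hk (x + ((k - h : ℕ) : ℝ) • w) ?_ ?_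
  · rw [hsplit]
    exact subset_interior_add_left (add_mem_add hx (smul_mem_smul_set hwP))
  · rw [Nat.cast_smul_eq_nsmul]
    exact (latticeAddSubgroup n).add_mem hxlat (nsmul_mem hw _)

theorem AffineBasis.exists_one_le_mul_coord_of_isHollow {ι : Type*} [Fintype ι] {n k N : ℕ}
    {P : Set (Fin n → ℝ)} (hk : IsHollow ((k : ℝ) • P)) (hP : Convex ℝ P)
    (b : AffineBasis ι ℝ (Fin n → ℝ)) (hbP : ∀ i, b i ∈ P) (hblat : ∀ i, b i ∈ latticePts n)
    {p : Fin n → ℝ} (hp : (N : ℝ) • p ∈ latticePts n) (hN : n + 1 ≤ N + k) :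
    ∃ i, 1 ≤ N * b.coord i p := by
  by_contra! hlt
  obtain ⟨i₀⟩ := b.nonempty
  set g : ι → ℝ := fun i => 1 - N * b.coord i p
  have hg : ∀ i, 0 < g i := fun i => sub_pos.2 (hlt i)
  have hsum : ∑ i, g i = (n + 1 : ℝ) - N := by
    simp only [g, sum_sub_distrib, ← mul_sum, b.sum_coord_apply_eq_one, sum_const, card_univ,
      b.card_eq_finrank_add_one, Module.finrank_fin_fun]
    ring
  have hNn : N ≤ n := by
    have : (N : ℝ) < n + 1 := by linarith [sum_pos (fun i _ => hg i) ⟨i₀, mem_univ i₀⟩]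
    exact Nat.lt_succ_iff.1 (by exact_mod_cast this)
  have hreflect : ∑ i, g i • b i = ∑ i, b i - (N : ℝ) • p := by
    simp only [g, sub_smul, one_smul, sum_sub_distrib, mul_smul, ← smul_sum,
      b.linear_combination_coord_eq_self]
  have hmem := b.sum_smul_mem_interior_smul_convexHull hg
  have hcast : (n + 1 : ℝ) - N = ((n + 1 - N : ℕ) : ℝ) := by
    push_cast [hNn.trans n.le_succ]
    ring
  rw [hsum, hreflect, hcast] at hmem
  refine hk.smul_of_le hP (hbP i₀) (hblat i₀) (by omega : n + 1 - N ≤ k) _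
    (interior_mono (smul_set_mono (convexHull_min (range_subset_iff.2 hbP) hP)) hmem) ?_
  exact (latticeAddSubgroup n).sub_mem (sum_mem fun i _ => hblat i) hp

section LatticePolytope

variable {n k : ℕ} {S : Set (Fin n → ℝ)}

theorem exists_sub_mem_smul_convexHull (hSlat : S ⊆ latticePts n) (hS : affineSpan ℝ S = ⊤)
    (hk : IsHollow ((k : ℝ) • convexHull ℝ S)) {M : ℕ} (hM : n ≤ M + k) {x : Fin n → ℝ}
    (hx : x ∈ ((M + 1 : ℕ) : ℝ) • convexHull ℝ S) (hxlat : x ∈ latticePts n) :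
    ∃ v ∈ S, x - v ∈ (M : ℝ) • convexHull ℝ S := by
  classical
  obtain ⟨p, hpS, rfl⟩ := hx
  obtain ⟨u, b, hb, huS, hpu⟩ := exists_affineBasis_subset_of_mem_convexHull hS hpS
  have := finite_of_fin_dim_affineIndependent ℝ b.ind
  have := Fintype.ofFinite u
  have hbS : ∀ i, b i ∈ S := fun i => hb ▸ huS i.2
  obtain ⟨i, hi⟩ := b.exists_one_le_mul_coord_of_isHollow hk (convex_convexHull ℝ S)
    (fun i => subset_convexHull ℝ S (hbS i)) (fun i => hSlat (hbS i)) hxlat (by omega)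
  have hcoord : ∀ j, 0 ≤ b.coord j p := by
    rwa [← Subtype.range_coe (s := u), ← hb, b.convexHull_eq_nonneg_coord] at hpu
  set w : u → ℝ := fun j => ((M + 1 : ℕ) : ℝ) * b.coord j p - (Pi.single i 1 : u → ℝ) j
  have hw : ∀ j, 0 ≤ w j := by
    intro j
    rcases eq_or_ne j i with rfl | hji
    · simpa [w] using hi
    · simpa [w, hji] using mul_nonneg (by positivity) (hcoord j)
  have hwsum : ∑ j, w j = M := by
    simp [w, sum_sub_distrib, ← mul_sum, b.sum_coord_apply_eq_one]
  have hwcomb : ∑ j, w j • b j = ((M + 1 : ℕ) : ℝ) • p - b i := by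
    simp [w, sub_smul, sum_sub_distrib, mul_smul, ← smul_sum, b.linear_combination_coord_eq_self,
      Pi.single_apply]
  refine ⟨b i, hbS i, ?_⟩
  rw [← hwcomb, ← hwsum]
  exact smul_set_mono (convexHull_mono (range_subset_iff.2 hbS) : convexHull ℝ (range b) ⊆ _)
    ((convex_convexHull ℝ _).sum_smul_mem_sum_smul ⟨b i, subset_convexHull ℝ _ (mem_range_self i)⟩
      univ (fun j _ => hw j) fun j _ => subset_convexHull ℝ _ (mem_range_self j))

theorem exists_add_of_mem_add_smul_convexHull (hSlat : S ⊆ latticePts n)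
    (hS : affineSpan ℝ S = ⊤) (hk : IsHollow ((k : ℝ) • convexHull ℝ S)) {M : ℕ}
    (hM : n ≤ M + k) (j : ℕ) {x : Fin n → ℝ} (hx : x ∈ ((M + j : ℕ) : ℝ) • convexHull ℝ S)
    (hxlat : x ∈ latticePts n) :
    ∃ y ∈ (M : ℝ) • convexHull ℝ S ∩ latticePts n,
      ∃ z ∈ (j : ℝ) • convexHull ℝ S ∩ latticePts n, x = y + z := by
  induction j generalizing x with
  | zero =>
    refine ⟨x, ⟨hx, hxlat⟩, 0, ⟨?_, (latticeAddSubgroup n).zero_mem⟩, (add_zero x).symm⟩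
    rw [Nat.cast_zero, zero_smul_set (convexHull_nonempty_of_affineSpan_eq_top hS)]
    rfl
  | succ j ih =>
    obtain ⟨v, hvS, hxv⟩ :=
      exists_sub_mem_smul_convexHull hSlat hS hk (M := M + j) (by omega) hx hxlat
    obtain ⟨y, hy, z, ⟨hz, hzlat⟩, hxvyz⟩ :=
      ih hxv ((latticeAddSubgroup n).sub_mem hxlat (hSlat hvS))
    refine ⟨y, hy, z + v, ⟨?_, (latticeAddSubgroup n).add_mem hzlat (hSlat hvS)⟩, ?_⟩
    · rw [Nat.cast_succ, (convex_convexHull ℝ S).add_smul j.cast_nonneg zero_le_one, one_smul]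
      exact add_mem_add hz (subset_convexHull ℝ S hvS)
    · rw [← add_assoc, ← hxvyz, sub_add_cancel]

theorem exists_fin_sum_of_mem_smul_smul_convexHull (hSlat : S ⊆ latticePts n)
    (hS : affineSpan ℝ S = ⊤) (hk : IsHollow ((k : ℝ) • convexHull ℝ S)) {ℓ : ℕ}
    (hℓ : n ≤ ℓ + k) (m : ℕ) {x : Fin n → ℝ}
    (hx : x ∈ (m : ℝ) • ((ℓ : ℝ) • convexHull ℝ S)) (hxlat : x ∈ latticePts n) :
    ∃ f : Fin m → (Fin n → ℝ),
      (∀ i, f i ∈ (ℓ : ℝ) • convexHull ℝ S ∩ latticePts n) ∧ x = ∑ i, f i := by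
  induction m generalizing x with
  | zero =>
    rw [Nat.cast_zero, zero_smul_set ((convexHull_nonempty_of_affineSpan_eq_top hS).smul_set)]
      at hx
    exact ⟨Fin.elim0, fun i => i.elim0, by simpa using hx⟩
  | succ m ih =>
    rw [smul_smul, ← Nat.cast_mul, Nat.succ_mul, add_comm] at hx
    obtain ⟨y, hy, z, ⟨hz, hzlat⟩, rfl⟩ :=
      exists_add_of_mem_add_smul_convexHull hSlat hS hk hℓ (m * ℓ) hx hxlat
    rw [Nat.cast_mul, ← smul_smul] at hz
    obtain ⟨f, hf, rfl⟩ := ih hz hzlat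
    exact ⟨Fin.cons y f, Fin.cases hy hf, (Fin.sum_cons y f).symm⟩

end LatticePolytope

theorem dilate_is_normal_general
    (n : ℕ)
    (S : Finset (Fin n → ℝ))
    (hSlat : (S : Set (Fin n → ℝ)) ⊆ latticePts n)
    (P : Set (Fin n → ℝ)) (hP : P = convexHull ℝ (S : Set (Fin n → ℝ)))
    (hPfull : (interior P).Nonempty)
    (k : ℕ)
    (hk : ∀ x ∈ interior ((k : ℝ) • P), x ∉ latticePts n)
    (ℓ : ℕ) (hℓ : max (n - k) 1 ≤ ℓ) :
    ∀ m : ℕ, 1 ≤ m →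
      ∀ x ∈ ((m : ℝ) • ((ℓ : ℝ) • P)) ∩ latticePts n,
        ∃ f : Fin m → (Fin n → ℝ),
          (∀ i, f i ∈ ((ℓ : ℝ) • P) ∩ latticePts n) ∧ x = ∑ i, f i := by
  subst hP
  intro m _ x hx
  exact exists_fin_sum_of_mem_smul_smul_convexHull hSlat
    (affineSpan_eq_top_of_nonempty_interior hPfull) hk (by omega) m hx.1 hx.2

/-- **Corollary 1.4.** Let `P ⊆ ℝ^n` (`n ≥ 1`) be a full-dimensional lattice polytope and
`k ≥ 0` an integer such that `kP` contains no lattice point in its interior. Then for every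
integer `ℓ ≥ max {n - k, 1}`, the dilate `ℓP` is normal: for every `m ≥ 1`, every lattice
point of `m(ℓP)` is a sum of `m` lattice points of `ℓP`. -/
theorem dilate_is_normal
    (n : ℕ) (hn : 1 ≤ n)
    (S : Finset (Fin n → ℝ)) (hS : S.Nonempty)
    (hSlat : (S : Set (Fin n → ℝ)) ⊆ latticePts n)
    (P : Set (Fin n → ℝ)) (hP : P = convexHull ℝ (S : Set (Fin n → ℝ)))
    (hPfull : (interior P).Nonempty)
    (k : ℕ)
    (hk : ∀ x ∈ interior ((k : ℝ) • P), x ∉ latticePts n)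
    (ℓ : ℕ) (hℓ : max (n - k) 1 ≤ ℓ) :
    ∀ m : ℕ, 1 ≤ m →
      ∀ x ∈ ((m : ℝ) • ((ℓ : ℝ) • P)) ∩ latticePts n,
        ∃ f : Fin m → (Fin n → ℝ),
          (∀ i, f i ∈ ((ℓ : ℝ) • P) ∩ latticePts n) ∧ x = ∑ i, f i :=
  dilate_is_normal_general n S hSlat P hP hPfull k hk ℓ hℓ
end

section
/- Let V be a real vector space of finite dimension n ≥ 1, let b be a basis of V, and let M ⊆ V be the ℤ-span of b (a lattice of full rank). Let P = conv(S) be the convex hull of a finite nonempty set S ⊆ M, and assume P has nonempty interior in V. Suppose k ≥ 0 is an integer such that kP contains no point of M in its interior. Then for every integer ℓ ≥ max{n − k, 1} and every integer m ≥ 1, every point of M lying in m(ℓP) is a sum of m points of M ∩ (ℓP). (Corollary 1.4 of the paper, stated for a full-rank lattice in an abstract real vector space.) -/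
/-!
By Carathéodory, a lattice point `x ∈ (m ℓ) P` is `∑ μ v • v` over an affinely independent
`T ⊆ S` with `∑ μ v = m ℓ`. Splitting `μ v = c v + F v` into integer and fractional parts, the
remainder `r = ∑ F v • v` is a lattice point of `t P`, where `t = ∑ F v ∈ ℕ`. Completing `T` to
an affine basis `T' ⊆ S`, the lattice point `∑_{T'} (1 - F v) • v` has positive barycentric
weights of total `n + 1 - t`, so it lies in the interior of `(n + 1 - t) P`; since the interior
of `k P`, and hence of every `j P` with `j ≤ k`, is free of lattice points, `t + k ≤ n ≤ ℓ + k`.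
So `r` plus `ℓ - t` of the vertices counted by `c` is a lattice point of `ℓ P` leaving a lattice
point of `(m - 1) ℓ P`, and induction on `m` concludes.
-/

open Pointwise Filter Topology

section Convex

variable {E : Type*} [AddCommGroup E] [Module ℝ E]

theorem Convex.sum_smul_mem_smul {C : Set E} (hC : Convex ℝ C) (hne : C.Nonempty)
    {T : Finset E} (hTC : ↑T ⊆ C) {w : E → ℝ} (hw : ∀ v ∈ T, 0 ≤ w v) :
    ∑ v ∈ T, w v • v ∈ (∑ v ∈ T, w v) • C := by
  rcases (Finset.sum_nonneg hw).eq_or_lt with hzero | hpos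
  · have hw0 := (Finset.sum_eq_zero_iff_of_nonneg hw).1 hzero.symm
    rw [← hzero, Set.zero_smul_set hne, Finset.sum_eq_zero fun v hv => by simp [hw0 v hv]]
    exact Set.zero_mem_zero
  · have hmem : T.centerMass w id ∈ C := hC.centerMass_mem hw hpos hTC
    convert Set.smul_mem_smul_set (a := ∑ v ∈ T, w v) hmem
    rw [Finset.centerMass, smul_inv_smul₀ hpos.ne']
    rfl

theorem exists_affineIndependent_of_mem_smul_convexHull {s : Set E} {a : ℝ} (ha : 0 ≤ a)
    {x : E} (hx : x ∈ a • convexHull ℝ s) :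
    ∃ T : Finset E, ↑T ⊆ s ∧ AffineIndependent ℝ ((↑) : T → E) ∧ ∃ μ : E → ℝ,
      (∀ v ∈ T, 0 ≤ μ v) ∧ ∑ v ∈ T, μ v = a ∧ ∑ v ∈ T, μ v • v = x := by
  obtain ⟨p, hp, rfl⟩ := hx
  rw [convexHull_eq_union] at hp
  simp only [Set.mem_iUnion] at hp
  obtain ⟨T, hTs, hTi, hpT⟩ := hp
  obtain ⟨w, hw0, hw1, rfl⟩ := Finset.mem_convexHull'.1 hpT
  refine ⟨T, hTs, hTi, fun v => a * w v, fun v hv => mul_nonneg ha (hw0 v hv), ?_, ?_⟩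
  · rw [← Finset.mul_sum, hw1, mul_one]
  · simp only [Finset.smul_sum, smul_smul]

end Convex

section Affine

variable {k V P : Type*} [DivisionRing k] [AddCommGroup V] [Module k V] [AddTorsor V P]

theorem exists_affineIndependent_extension {s t : Set P}
    (hs : AffineIndependent k ((↑) : s → P)) (hst : s ⊆ t) (ht : affineSpan k t = ⊤) :
    ∃ u, s ⊆ u ∧ u ⊆ t ∧ AffineIndependent k ((↑) : u → P) ∧ affineSpan k u = ⊤ := by
  rcases s.eq_empty_or_nonempty with rfl | ⟨p, hp⟩
  · obtain ⟨u, hut, hu, hui⟩ := exists_affineIndependent k V t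
    exact ⟨u, Set.empty_subset _, hut, hui, hu.trans ht⟩
  rw [affineIndependent_set_iff_linearIndependent_vsub k hp] at hs
  obtain ⟨b, hbt, hsb, htb, hb⟩ := exists_linearIndepOn_id_extension (K := k) hs
    (Set.image_mono (s := s \ {p}) (t := t) (f := (· -ᵥ p)) (Set.sdiff_subset.trans hst))
  have hspan : Submodule.span k b = ⊤ := by
    have := AffineSubspace.vectorSpan_eq_top_of_affineSpan_eq_top k V P ht
    rw [vectorSpan_eq_span_vsub_set_right k (hst hp)] at this
    exact top_le_iff.1 (this ▸ Submodule.span_le.2 htb)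
  have hb0 : ∀ v ∈ b, v ≠ 0 := fun v hv h0 => hb.zero_notMem_image ⟨v, hv, h0⟩
  refine ⟨{p} ∪ (· +ᵥ p) '' b, ?_, ?_,
    (linearIndependent_set_iff_affineIndependent_vadd_union_singleton k hb0 p).1 hb,
    affineSpan_singleton_union_vadd_eq_top_of_span_eq_top p (by simpa using hspan)⟩
  · intro x hx
    by_cases hxp : x = p
    · exact Or.inl hxp
    · exact Or.inr ⟨x -ᵥ p, hsb ⟨x, ⟨hx, hxp⟩, rfl⟩, vsub_vadd x p⟩
  · rintro _ (rfl | ⟨_, hv, rfl⟩)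
    · exact hst hp
    · obtain ⟨z, hz, rfl⟩ := hbt hv
      simpa using hz

end Affine

section Topology

variable {V : Type*} [AddCommGroup V] [Module ℝ V] [TopologicalSpace V]
  [IsTopologicalAddGroup V]

theorem affineSpan_eq_top_of_interior_convexHull_nonempty [ContinuousSMul ℝ V] {s : Set V}
    (hs : (interior (convexHull ℝ s)).Nonempty) : affineSpan ℝ s = ⊤ := by
  obtain ⟨x, hx⟩ := hs
  have hxs : x ∈ affineSpan ℝ s :=
    (affineSpan_convexHull (𝕜 := ℝ) s) ▸ mem_affineSpan ℝ (interior_subset hx)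
  rw [← AffineSubspace.direction_eq_top_iff_of_nonempty (s := affineSpan ℝ s) ⟨x, hxs⟩]
  refine Submodule.eq_top_of_nonempty_interior' (R := ℝ) _ ⟨0, ?_⟩
  refine interior_maximal (t := (· - x) '' interior (convexHull ℝ s)) ?_
    ((isOpenMap_sub_right x) _ isOpen_interior) ⟨x, hx, sub_self x⟩
  rintro _ ⟨y, hy, rfl⟩
  exact AffineSubspace.vsub_mem_direction
    ((affineSpan_convexHull (𝕜 := ℝ) s) ▸ mem_affineSpan ℝ (interior_subset hy)) hxs

variable [ContinuousConstSMul ℝ V]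

theorem Convex.sum_smul_mem_interior {C : Set V} (hC : Convex ℝ C) {q : V}
    (hq : q ∈ interior C) {T : Finset V} (hTC : ↑T ⊆ C)
    (hT : affineSpan ℝ (T : Set V) = ⊤) {w : V → ℝ} (hw : ∀ v ∈ T, 0 < w v)
    (hw1 : ∑ v ∈ T, w v = 1) : ∑ v ∈ T, w v • v ∈ interior C := by
  classical
  obtain ⟨fs, a, hfs, ha1, hqa⟩ := eq_affineCombination_of_mem_affineSpan_image (k := ℝ)
    (p := id) (s := (T : Set V)) (p₁ := q) (by simp [hT])
  rw [Finset.affineCombination_eq_linear_combination _ _ _ ha1] at hqa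
  -- `b` is the barycentric coordinate vector of `q` with respect to `T`
  set b : V → ℝ := fun v => if v ∈ fs then a v else 0
  have hfsT : fs ⊆ T := Finset.coe_subset.1 hfs
  have hb1 : ∑ v ∈ T, b v = 1 := by
    rw [← ha1, ← Finset.sum_subset hfsT (fun v _ hv => by simp [b, hv])]
    exact Finset.sum_congr rfl fun v hv => by simp [b, hv]
  have hbq : ∑ v ∈ T, b v • v = q := by
    rw [hqa, ← Finset.sum_subset hfsT (fun v _ hv => by simp [b, hv])]
    exact Finset.sum_congr rfl fun v hv => by simp [b, hv]
  -- prolonging the segment from `q` to `∑ w v • v` a little beyond it stays in the hull of `T`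
  have hsmall : ∀ᶠ ε in 𝓝[>] (0 : ℝ), ∀ v ∈ T, 0 < w v + ε * (w v - b v) := by
    refine (Filter.eventually_all_finset T).2 fun v hv => nhdsWithin_le_nhds ?_
    have hcont : Continuous fun ε : ℝ => w v + ε * (w v - b v) := by fun_prop
    exact hcont.continuousAt.eventually (lt_mem_nhds (by simpa using hw v hv))
  obtain ⟨ε, hε, hεpos : 0 < ε⟩ := (hsmall.and self_mem_nhdsWithin).exists
  set y := ∑ v ∈ T, (w v + ε * (w v - b v)) • v
  have hy : y ∈ C := hC.sum_mem (fun v hv => (hε v hv).le)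
    (by simp only [Finset.sum_add_distrib, ← Finset.mul_sum, Finset.sum_sub_distrib, hw1, hb1]
        ring) hTC
  have hscaled : (1 + ε) • ∑ v ∈ T, w v • v = ε • q + y := by
    simp only [y, ← hbq, Finset.smul_sum, ← Finset.sum_add_distrib]
    exact Finset.sum_congr rfl fun v _ => by module
  have hcombo : ∑ v ∈ T, w v • v = (ε / (1 + ε)) • q + (1 / (1 + ε)) • y := by
    rw [← inv_smul_smul₀ (by positivity : (1 + ε) ≠ 0) (∑ v ∈ T, w v • v), hscaled]
    module
  rw [hcombo]
  exact hC.combo_interior_self_mem_interior hq hy (by positivity) (by positivity)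
    (by field_simp; ring)

theorem Convex.sum_smul_mem_interior_smul {C : Set V} (hC : Convex ℝ C)
    (hint : (interior C).Nonempty) {T : Finset V} (hTC : ↑T ⊆ C)
    (hT : affineSpan ℝ (T : Set V) = ⊤) {w : V → ℝ} (hw : ∀ v ∈ T, 0 < w v) :
    ∑ v ∈ T, w v • v ∈ interior ((∑ v ∈ T, w v) • C) := by
  obtain ⟨q, hq⟩ := hint
  have hTne : T.Nonempty := by
    simpa using (AffineSubspace.nonempty_of_affineSpan_eq_top ℝ V V hT)
  have hW : 0 < ∑ v ∈ T, w v := Finset.sum_pos hw hTne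
  have hcenter : ∑ v ∈ T, ((∑ u ∈ T, w u)⁻¹ * w v) • v ∈ interior C :=
    hC.sum_smul_mem_interior hq hTC hT (fun v hv => mul_pos (inv_pos.2 hW) (hw v hv))
      (by rw [← Finset.mul_sum, inv_mul_cancel₀ hW.ne'])
  rw [interior_smul₀ hW.ne']
  convert Set.smul_mem_smul_set (a := ∑ v ∈ T, w v) hcenter using 1
  simp only [Finset.smul_sum, smul_smul, mul_inv_cancel_left₀ hW.ne']

end Topology

section Lattice

variable {V : Type*} [AddCommGroup V] [Module ℝ V] {M : Submodule ℤ V}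

theorem Finset.exists_le_sum_eq_of_le_sum {ι : Type*} (T : Finset ι) (c : ι → ℕ) {s : ℕ}
    (hs : s ≤ ∑ i ∈ T, c i) : ∃ d : ι → ℕ, (∀ i ∈ T, d i ≤ c i) ∧ ∑ i ∈ T, d i = s := by
  classical
  induction T using Finset.induction generalizing s with
  | empty => exact ⟨0, by simp, by simp at hs; simp [hs]⟩
  | @insert a T ha ih =>
    rw [Finset.sum_insert ha] at hs
    obtain ⟨d, hdc, hds⟩ := ih (s := s - min s (c a)) (by omega)
    refine ⟨Function.update d a (min s (c a)), ?_, ?_⟩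
    · intro i hi
      rcases eq_or_ne i a with rfl | hia
      · simp
      · simpa [hia] using hdc i (Finset.mem_of_mem_insert_of_ne hi hia)
    · rw [Finset.sum_insert ha, Function.update_self,
        Finset.sum_congr rfl fun i hi => Function.update_of_ne (ne_of_mem_of_not_mem hi ha) _ _,
        hds]
      omega

theorem natCast_smul_mem_of_mem {x : V} (hx : x ∈ M) (c : ℕ) : (c : ℝ) • x ∈ M := by
  rw [Nat.cast_smul_eq_nsmul]
  exact nsmul_mem hx c

theorem exists_split_add_sum_smul {P : Set V} (hP : Convex ℝ P) (hne : P.Nonempty)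
    {T : Finset V} (hTP : ↑T ⊆ P) (hTM : ∀ v ∈ T, v ∈ M) (c : V → ℕ) {r : V} (hrM : r ∈ M)
    {t ℓ j : ℕ} (hr : r ∈ (t : ℝ) • P) (htℓ : t ≤ ℓ) (hmass : t + ∑ v ∈ T, c v = ℓ + j) :
    ∃ y ∈ M, y ∈ (ℓ : ℝ) • P ∧ r + ∑ v ∈ T, (c v : ℝ) • v - y ∈ (j : ℝ) • P := by
  obtain ⟨d, hdc, hds⟩ := T.exists_le_sum_eq_of_le_sum c (s := ℓ - t) (by omega)
  refine ⟨r + ∑ v ∈ T, (d v : ℝ) • v,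
    add_mem hrM (Submodule.sum_mem M fun v hv => natCast_smul_mem_of_mem (hTM v hv) _), ?_, ?_⟩
  · have hd := hP.sum_smul_mem_smul hne hTP (w := fun v => (d v : ℝ)) fun _ _ => Nat.cast_nonneg _
    rw [← Nat.cast_sum, hds] at hd
    rw [← Nat.add_sub_cancel' htℓ, Nat.cast_add,
      hP.add_smul (Nat.cast_nonneg _) (Nat.cast_nonneg _)]
    exact Set.add_mem_add hr hd
  · have hcd := hP.sum_smul_mem_smul hne hTP (w := fun v => ((c v - d v : ℕ) : ℝ))
      fun _ _ => Nat.cast_nonneg _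
    rw [← Nat.cast_sum, Finset.sum_tsub_distrib _ hdc, hds,
      show ∑ v ∈ T, c v - (ℓ - t) = j by omega] at hcd
    convert hcd using 1
    rw [add_sub_add_left_eq_sub, ← Finset.sum_sub_distrib]
    exact Finset.sum_congr rfl fun v hv => by rw [Nat.cast_sub (hdc v hv), sub_smul]

variable [TopologicalSpace V] [IsTopologicalAddGroup V]

theorem notMem_of_mem_interior_smul_of_le {P : Set V} (hP : Convex ℝ P) {v₀ : V}
    (hv₀P : v₀ ∈ P) (hv₀M : v₀ ∈ M) {j k : ℕ} (hjk : j ≤ k)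
    (hk : ∀ x ∈ interior ((k : ℝ) • P), x ∉ M) : ∀ x ∈ interior ((j : ℝ) • P), x ∉ M := by
  intro x hx hxM
  have hsplit : (k : ℝ) • P = (j : ℝ) • P + ((k - j : ℕ) : ℝ) • P := by
    rw [← hP.add_smul (Nat.cast_nonneg _) (Nat.cast_nonneg _), ← Nat.cast_add,
      Nat.add_sub_cancel' hjk]
  refine hk (x + ((k - j : ℕ) : ℝ) • v₀) ?_ (add_mem hxM (natCast_smul_mem_of_mem hv₀M _))
  rw [hsplit]
  exact subset_interior_add_left (Set.add_mem_add hx (Set.smul_mem_smul_set hv₀P))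

variable [ContinuousSMul ℝ V] [FiniteDimensional ℝ V] {S : Finset V}

theorem add_le_finrank_of_sum_fract_smul_mem (hSM : ∀ x ∈ S, x ∈ M)
    (hint : (interior (convexHull ℝ (S : Set V))).Nonempty) {k : ℕ}
    (hk : ∀ x ∈ interior ((k : ℝ) • convexHull ℝ (S : Set V)), x ∉ M)
    {T : Finset V} (hTS : T ⊆ S) (hT : AffineIndependent ℝ ((↑) : T → V))
    {F : V → ℝ} (hF : ∀ v ∈ T, F v < 1) (hFM : ∑ v ∈ T, F v • v ∈ M)
    {t : ℕ} (ht : ∑ v ∈ T, F v = t) : t + k ≤ Module.finrank ℝ V := by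
  classical
  set n := Module.finrank ℝ V
  have hconv : Convex ℝ (convexHull ℝ (S : Set V)) := convex_convexHull ℝ _
  obtain ⟨_, hTu, huS, hui, huspan⟩ := exists_affineIndependent_extension hT
    (Finset.coe_subset.2 hTS) (affineSpan_eq_top_of_interior_convexHull_nonempty hint)
  obtain ⟨T', rfl⟩ := ((S : Set V).toFinite.subset huS).exists_finset_coe
  have hcard : T'.card = n + 1 := by
    simpa using hui.affineSpan_eq_top_iff_card_eq_finrank_add_one.1 (by simpa using huspan)
  obtain ⟨v₀, hv₀⟩ : T'.Nonempty := Finset.card_pos.1 (by omega)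
  have hTT' : T ⊆ T' := Finset.coe_subset.1 hTu
  set G : V → ℝ := fun v => if v ∈ T then F v else 0
  have hG : ∑ v ∈ T', G v = t := by
    rw [Finset.sum_ite_mem, Finset.inter_eq_right.2 hTT', ht]
  have hGv : ∑ v ∈ T', G v • v = ∑ v ∈ T, F v • v := by
    simp only [G, ite_smul, zero_smul]
    rw [Finset.sum_ite_mem, Finset.inter_eq_right.2 hTT']
  have hzM : ∑ v ∈ T', (1 - G v) • v ∈ M := by
    simp only [sub_smul, one_smul, Finset.sum_sub_distrib, hGv]
    exact sub_mem (Submodule.sum_mem M fun v hv => hSM v (Finset.coe_subset.1 huS hv)) hFM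
  have hw : ∀ v ∈ T', 0 < 1 - G v := fun v _ =>
    sub_pos.2 (by by_cases hv : v ∈ T <;> simp [G, hv, hF])
  have hz := hconv.sum_smul_mem_interior_smul hint
    (fun v hv => subset_convexHull ℝ _ (huS hv)) huspan hw
  have hpos := Finset.sum_pos hw ⟨v₀, hv₀⟩
  rw [Finset.sum_sub_distrib, hG] at hz hpos
  simp only [Finset.sum_const, hcard, nsmul_eq_mul, mul_one, Nat.cast_add, Nat.cast_one] at hz hpos
  have htn : t ≤ n + 1 := by exact_mod_cast (by linarith : (t : ℝ) ≤ n + 1)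
  by_contra hlt
  refine notMem_of_mem_interior_smul_of_le hconv (subset_convexHull ℝ _ (huS hv₀))
    (hSM v₀ (Finset.coe_subset.1 huS hv₀)) (j := n + 1 - t) (by omega) hk _ ?_ hzM
  rwa [Nat.cast_sub htn, Nat.cast_add, Nat.cast_one]

theorem exists_split_of_mem_smul_convexHull (hSM : ∀ x ∈ S, x ∈ M)
    (hint : (interior (convexHull ℝ (S : Set V))).Nonempty) {k : ℕ}
    (hk : ∀ x ∈ interior ((k : ℝ) • convexHull ℝ (S : Set V)), x ∉ M)
    {ℓ : ℕ} (hℓ : Module.finrank ℝ V ≤ ℓ + k) {j : ℕ} {x : V} (hxM : x ∈ M)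
    (hx : x ∈ ((ℓ + j : ℕ) : ℝ) • convexHull ℝ (S : Set V)) :
    ∃ y ∈ M, y ∈ (ℓ : ℝ) • convexHull ℝ (S : Set V) ∧
      x - y ∈ (j : ℝ) • convexHull ℝ (S : Set V) := by
  have hconv : Convex ℝ (convexHull ℝ (S : Set V)) := convex_convexHull ℝ _
  have hne : (convexHull ℝ (S : Set V)).Nonempty := hint.mono interior_subset
  obtain ⟨T, hTS, hTi, μ, hμ0, hμ1, rfl⟩ :=
    exists_affineIndependent_of_mem_smul_convexHull (Nat.cast_nonneg _) hx
  have hTP : (T : Set V) ⊆ convexHull ℝ (S : Set V) := hTS.trans (subset_convexHull ℝ _)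
  have hTM : ∀ v ∈ T, v ∈ M := fun v hv => hSM v (Finset.coe_subset.1 hTS hv)
  set c : V → ℕ := fun v => ⌊μ v⌋₊
  set F : V → ℝ := fun v => μ v - c v
  have hsplit : ∑ v ∈ T, μ v • v = ∑ v ∈ T, F v • v + ∑ v ∈ T, (c v : ℝ) • v := by
    rw [← Finset.sum_add_distrib]
    exact Finset.sum_congr rfl fun v _ => by rw [← add_smul, sub_add_cancel]
  have hcM : ∑ v ∈ T, (c v : ℝ) • v ∈ M :=
    Submodule.sum_mem M fun v hv => natCast_smul_mem_of_mem (hTM v hv) _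
  have hFM : ∑ v ∈ T, F v • v ∈ M := by
    simpa [hsplit] using sub_mem hxM hcM
  have hcle : ∑ v ∈ T, c v ≤ ℓ + j := by
    have : ∑ v ∈ T, (c v : ℝ) ≤ ∑ v ∈ T, μ v :=
      Finset.sum_le_sum fun v hv => Nat.floor_le (hμ0 v hv)
    exact_mod_cast hμ1 ▸ this
  set t := ℓ + j - ∑ v ∈ T, c v
  have ht : ∑ v ∈ T, F v = t := by
    simp only [F, t, Finset.sum_sub_distrib, hμ1, Nat.cast_sub hcle, Nat.cast_sum]
  have htℓ : t ≤ ℓ := by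
    have := add_le_finrank_of_sum_fract_smul_mem hSM hint hk (Finset.coe_subset.1 hTS) hTi
      (fun v _ => sub_lt_iff_lt_add'.2 (Nat.lt_floor_add_one (μ v))) hFM ht
    omega
  have hr : ∑ v ∈ T, F v • v ∈ (t : ℝ) • convexHull ℝ (S : Set V) :=
    ht ▸ hconv.sum_smul_mem_smul hne hTP fun v hv => sub_nonneg.2 (Nat.floor_le (hμ0 v hv))
  rw [hsplit]
  exact exists_split_add_sum_smul hconv hne hTP hTM c hFM hr htℓ (by omega)

theorem exists_sum_eq_of_mem_smul_convexHull (hSM : ∀ x ∈ S, x ∈ M)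
    (hint : (interior (convexHull ℝ (S : Set V))).Nonempty) {k : ℕ}
    (hk : ∀ x ∈ interior ((k : ℝ) • convexHull ℝ (S : Set V)), x ∉ M)
    {ℓ : ℕ} (hℓ : Module.finrank ℝ V ≤ ℓ + k) {m : ℕ} (hm : 1 ≤ m) {x : V} (hxM : x ∈ M)
    (hx : x ∈ ((m * ℓ : ℕ) : ℝ) • convexHull ℝ (S : Set V)) :
    ∃ f : Fin m → V, (∀ i, f i ∈ (ℓ : ℝ) • convexHull ℝ (S : Set V) ∧ f i ∈ M) ∧
      x = ∑ i, f i := by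
  induction m, hm using Nat.le_induction generalizing x with
  | base => exact ⟨fun _ => x, fun _ => ⟨by simpa using hx, hxM⟩, by simp⟩
  | succ m _ ih =>
    obtain ⟨y, hyM, hy, hxy⟩ := exists_split_of_mem_smul_convexHull hSM hint hk hℓ hxM
      (j := m * ℓ) (by rwa [Nat.add_comm, ← Nat.succ_mul])
    obtain ⟨f, hf, hsum⟩ := ih (sub_mem hxM hyM) (by exact_mod_cast hxy)
    refine ⟨Fin.cons y f, Fin.cases ⟨hy, hyM⟩ hf, ?_⟩
    rw [Fin.sum_cons, ← hsum, add_sub_cancel]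

end Lattice

theorem dilate_is_normal_lattice_general
    (V : Type*) [AddCommGroup V] [Module ℝ V]
    [TopologicalSpace V] [IsTopologicalAddGroup V] [ContinuousSMul ℝ V]
    (n : ℕ)
    (b : Module.Basis (Fin n) ℝ V)
    (M : Submodule ℤ V)
    (S : Finset V) (hSM : ∀ x ∈ S, x ∈ M)
    (P : Set V) (hP : P = convexHull ℝ (S : Set V))
    (hPfull : (interior P).Nonempty)
    (k : ℕ)
    (hk : ∀ x ∈ interior ((k : ℝ) • P), x ∉ M)
    (ℓ : ℕ) (hℓ : max (n - k) 1 ≤ ℓ) :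
    ∀ m : ℕ, 1 ≤ m →
      ∀ x ∈ ((m : ℝ) • ((ℓ : ℝ) • P)), x ∈ M →
        ∃ f : Fin m → V,
          (∀ i, f i ∈ ((ℓ : ℝ) • P) ∧ f i ∈ M) ∧ x = ∑ i, f i := by
  subst hP
  have : FiniteDimensional ℝ V := b.finiteDimensional_of_finite
  have hrank : Module.finrank ℝ V ≤ ℓ + k := by
    rw [Module.finrank_eq_card_basis b, Fintype.card_fin]
    omega
  intro m hm x hx hxM
  rw [smul_smul, ← Nat.cast_mul] at hx
  exact exists_sum_eq_of_mem_smul_convexHull hSM hPfull hk hrank hm hxM hx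

/-- **Corollary 1.4** (abstract form). Let `V` be a real topological vector space of finite
dimension `n ≥ 1`, `b` a basis of `V` and `M` the `ℤ`-span of `b` (a full-rank lattice).
Let `P = conv S` for a finite nonempty `S ⊆ M`, with nonempty interior in `V`. If `k ≥ 0`
is an integer such that `kP` contains no point of `M` in its interior, then for every
`ℓ ≥ max {n - k, 1}` and every `m ≥ 1`, every point of `M` lying in `m(ℓP)` is a sum of
`m` points of `M ∩ ℓP`. -/
theorem dilate_is_normal_lattice
    (V : Type*) [AddCommGroup V] [Module ℝ V]
    [TopologicalSpace V] [IsTopologicalAddGroup V] [ContinuousSMul ℝ V]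
    (n : ℕ) (hn : 1 ≤ n)
    (b : Module.Basis (Fin n) ℝ V)
    (M : Submodule ℤ V) (hM : M = Submodule.span ℤ (Set.range ⇑b))
    (S : Finset V) (hS : S.Nonempty) (hSM : ∀ x ∈ S, x ∈ M)
    (P : Set V) (hP : P = convexHull ℝ (S : Set V))
    (hPfull : (interior P).Nonempty)
    (k : ℕ)
    (hk : ∀ x ∈ interior ((k : ℝ) • P), x ∉ M)
    (ℓ : ℕ) (hℓ : max (n - k) 1 ≤ ℓ) :
    ∀ m : ℕ, 1 ≤ m →
      ∀ x ∈ ((m : ℝ) • ((ℓ : ℝ) • P)), x ∈ M →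
        ∃ f : Fin m → V,
          (∀ i, f i ∈ ((ℓ : ℝ) • P) ∧ f i ∈ M) ∧ x = ∑ i, f i :=
  dilate_is_normal_lattice_general V n b M S hSM P hP hPfull k hk ℓ hℓ
end

section
/- Let n ≥ 2 and let P ⊆ ℝ^n be a full-dimensional lattice polytope whose interior contains no lattice point. Then for every integer ℓ ≥ n − 1, the dilate ℓP is normal: for every integer m ≥ 1, every lattice point of m(ℓP) is a sum of m lattice points of ℓP. (Special case k = 1 of the paper's Corollary 1.4.) -/
/-!
Write a lattice point `z` of `(t + 1)P`, `P = conv S`, by Carathéodory as `∑ λᵢ vᵢ` with affinely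
independent `vᵢ ∈ S`, `λᵢ > 0` and `∑ λᵢ = t + 1`. If some `λᵢ ≥ 1`, then `z - vᵢ` is a lattice
point of `tP`. Otherwise there are more than `t + 1 ≥ n` points `vᵢ`, hence exactly `n + 1 = t + 2`
of them, and `∑ vᵢ - z = ∑ (1 - λᵢ) vᵢ` is a lattice point with positive barycentric coordinates
in the simplex spanned by the `vᵢ`, i.e. an interior lattice point of `P`. So as long as
`t + 1 ≥ n`, one can peel off points of `S` one at a time; peeling `ℓ` points at a time splits a
lattice point of `mℓP` into `m` lattice points of `ℓP` once `ℓ ≥ n - 1`.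
-/

open Pointwise

def latticeSubgroup (n : ℕ) : AddSubgroup (Fin n → ℝ) where
  carrier := latticePts n
  zero_mem' i := ⟨0, by simp⟩
  add_mem' {x y} hx hy i := by
    obtain ⟨a, ha⟩ := hx i
    obtain ⟨b, hb⟩ := hy i
    exact ⟨a + b, by simp [ha, hb]⟩
  neg_mem' {x} hx i := by
    obtain ⟨a, ha⟩ := hx i
    exact ⟨-a, by simp [ha]⟩

section Peeling

variable {E : Type*}

theorem sum_smul_mem_sum_smul_convexHull [AddCommGroup E] [Module ℝ E] {ι : Type*}
    (t : Finset ι) {A : Set E} (hA : A.Nonempty) {μ : ι → ℝ} {v : ι → E}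
    (hμ : ∀ i ∈ t, 0 ≤ μ i) (hv : ∀ i ∈ t, v i ∈ A) :
    ∑ i ∈ t, μ i • v i ∈ (∑ i ∈ t, μ i) • convexHull ℝ A := by
  rcases (Finset.sum_nonneg hμ).eq_or_lt with hsum | hsum
  · have hμ0 : ∀ i ∈ t, μ i = 0 := (Finset.sum_eq_zero_iff_of_nonneg hμ).mp hsum.symm
    rw [← hsum, Set.zero_smul_set (hA.convexHull), Finset.sum_eq_zero fun i hi => by
      rw [hμ0 i hi, zero_smul]]
    exact Set.zero_mem_zero
  · have hcm : ∑ i ∈ t, μ i • v i = (∑ i ∈ t, μ i) • t.centerMass μ v := by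
      rw [Finset.centerMass, smul_smul, mul_inv_cancel₀ hsum.ne', one_smul]
    rw [hcm]
    exact Set.smul_mem_smul_set (t.centerMass_mem_convexHull hμ hsum hv)

variable [NormedAddCommGroup E] [NormedSpace ℝ E]

theorem AffineIndependent.sum_smul_mem_interior_convexHull [FiniteDimensional ℝ E] {ι : Type*}
    [Fintype ι] {v : ι → E} (hv : AffineIndependent ℝ v)
    (hcard : Fintype.card ι = Module.finrank ℝ E + 1) {μ : ι → ℝ} (hμ : ∀ i, 0 < μ i)
    (hμ1 : ∑ i, μ i = 1) :
    ∑ i, μ i • v i ∈ interior (convexHull ℝ (Set.range v)) := by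
  let b : AffineBasis ι ℝ E :=
    ⟨v, hv, hv.affineSpan_eq_top_iff_card_eq_finrank_add_one.mpr hcard⟩
  have hcomb : ∑ i, μ i • v i = Finset.univ.affineCombination ℝ b μ :=
    (Finset.affineCombination_eq_linear_combination _ _ _ hμ1).symm
  change _ ∈ interior (convexHull ℝ (Set.range b))
  rw [b.interior_convexHull, hcomb]
  intro i
  rw [b.coord_apply_combination_of_mem (Finset.mem_univ i) hμ1]
  exact hμ i

variable [FiniteDimensional ℝ E] {L : AddSubgroup E} {S : Set E}

theorem exists_one_le_of_sum_smul_mem_of_hollow (hSL : S ⊆ L)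
    (hollow : ∀ x ∈ interior (convexHull ℝ S), x ∉ L) {t : ℕ}
    (ht : Module.finrank ℝ E ≤ t + 1) {ι : Type*} [Fintype ι] {v : ι → E}
    (hv : AffineIndependent ℝ v) (hvS : ∀ i, v i ∈ S) {c : ι → ℝ} (hcsum : ∑ i, c i = t + 1)
    (hcL : ∑ i, c i • v i ∈ L) :
    ∃ j, 1 ≤ c j := by
  by_contra! hsmall
  have hcard_gt : t + 1 < Fintype.card ι := by
    have hne : Nonempty ι := by
      by_contra hempty
      rw [not_nonempty_iff] at hempty
      simp only [Finset.univ_eq_empty, Finset.sum_empty] at hcsum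
      linarith [t.cast_nonneg (α := ℝ)]
    have : ((t + 1 : ℕ) : ℝ) < Fintype.card ι := by
      calc ((t + 1 : ℕ) : ℝ) = ∑ i, c i := by rw [hcsum]; push_cast; ring
        _ < ∑ _i : ι, (1 : ℝ) := Finset.sum_lt_sum_of_nonempty Finset.univ_nonempty
            fun i _ => hsmall i
        _ = Fintype.card ι := by simp
    exact_mod_cast this
  have hcard_le : Fintype.card ι ≤ Module.finrank ℝ E + 1 :=
    hv.card_le_finrank_succ.trans (Nat.succ_le_succ (Submodule.finrank_le _))
  have hcard : Fintype.card ι = Module.finrank ℝ E + 1 := by omega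
  have hμsum : ∑ i, (1 - c i) = 1 := by
    rw [Finset.sum_sub_distrib, hcsum]
    simp only [Finset.sum_const, Finset.card_univ, nsmul_eq_mul, mul_one]
    rw [show Fintype.card ι = t + 2 by omega]
    push_cast
    ring
  have hp : ∑ i, (1 - c i) • v i = ∑ i, v i - ∑ i, c i • v i := by
    simp [sub_smul, Finset.sum_sub_distrib]
  refine hollow _ (interior_mono (convexHull_mono (Set.range_subset_iff.2 hvS))
    (hv.sum_smul_mem_interior_convexHull hcard (fun i => sub_pos.2 (hsmall i)) hμsum)) ?_
  rw [hp]
  exact L.sub_mem (L.sum_mem fun i _ => hSL (hvS i)) hcL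

theorem exists_sub_mem_smul_convexHull_of_hollow (hSL : S ⊆ L)
    (hollow : ∀ x ∈ interior (convexHull ℝ S), x ∉ L) {t : ℕ}
    (ht : Module.finrank ℝ E ≤ t + 1) {z : E} (hz : z ∈ ((t + 1 : ℕ) : ℝ) • convexHull ℝ S)
    (hzL : z ∈ L) :
    ∃ v ∈ S, z - v ∈ (t : ℝ) • convexHull ℝ S := by
  classical
  have ht0 : ((t + 1 : ℕ) : ℝ) ≠ 0 := by positivity
  rw [Set.mem_smul_set_iff_inv_smul_mem₀ ht0] at hz
  obtain ⟨ι, _, v, w, hvS, hv, hw0, hw1, hwz⟩ := eq_pos_convex_span_of_mem_convexHull hz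
  have hvS' (i : ι) : v i ∈ S := hvS ⟨i, rfl⟩
  set c : ι → ℝ := fun i => ((t + 1 : ℕ) : ℝ) * w i
  have hz_eq : z = ∑ i, c i • v i := by
    simp only [c, mul_smul, ← Finset.smul_sum, hwz, smul_inv_smul₀ ht0]
  have hcsum : ∑ i, c i = t + 1 := by
    simp [c, ← Finset.mul_sum, hw1]
  obtain ⟨j, hj⟩ :=
    exists_one_le_of_sum_smul_mem_of_hollow hSL hollow ht hv hvS' hcsum (hz_eq ▸ hzL)
  refine ⟨v j, hvS' j, ?_⟩
  set κ : ι → ℝ := fun i => c i - if i = j then 1 else 0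
  have hzv : z - v j = ∑ i, κ i • v i := by
    simp [κ, sub_smul, ite_smul, Finset.sum_sub_distrib, hz_eq]
  have hκsum : (t : ℝ) = ∑ i, κ i := by
    simp [κ, Finset.sum_sub_distrib, hcsum]
  have hκ (i : ι) (_ : i ∈ Finset.univ) : 0 ≤ κ i := by
    by_cases hij : i = j
    · simpa [κ, hij] using hj
    · simpa [κ, hij] using (mul_pos (by positivity) (hw0 i)).le
  rw [hzv, hκsum]
  exact sum_smul_mem_sum_smul_convexHull _ ⟨v j, hvS' j⟩ hκ fun i _ => hvS' i

theorem exists_sum_sub_mem_smul_convexHull_of_hollow (hSL : S ⊆ L)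
    (hollow : ∀ x ∈ interior (convexHull ℝ S), x ∉ L) {t : ℕ}
    (ht : Module.finrank ℝ E ≤ t + 1) (j : ℕ) {z : E}
    (hz : z ∈ ((t + j : ℕ) : ℝ) • convexHull ℝ S) (hzL : z ∈ L) :
    ∃ g : Fin j → E, (∀ i, g i ∈ S) ∧ z - ∑ i, g i ∈ (t : ℝ) • convexHull ℝ S := by
  induction j generalizing z with
  | zero => exact ⟨![], fun i => i.elim0, by simpa using hz⟩
  | succ j ih =>
    obtain ⟨v, hvS, hzv⟩ :=
      exists_sub_mem_smul_convexHull_of_hollow hSL hollow (t := t + j) (by omega) hz hzL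
    obtain ⟨g, hgS, hg⟩ := ih hzv (L.sub_mem hzL (hSL hvS))
    refine ⟨Fin.cons v g, Fin.cases hvS hgS, ?_⟩
    rwa [Fin.sum_cons, ← sub_sub]

end Peeling

theorem dilate_is_normal_of_no_interior_lattice_point_general
    (n : ℕ)
    (S : Finset (Fin n → ℝ)) (hS : S.Nonempty)
    (hSlat : (S : Set (Fin n → ℝ)) ⊆ latticePts n)
    (P : Set (Fin n → ℝ)) (hP : P = convexHull ℝ (S : Set (Fin n → ℝ)))
    (hk : ∀ x ∈ interior P, x ∉ latticePts n)
    (ℓ : ℕ) (hℓ : n - 1 ≤ ℓ) :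
    ∀ m : ℕ, 1 ≤ m →
      ∀ x ∈ ((m : ℝ) • ((ℓ : ℝ) • P)) ∩ latticePts n,
        ∃ f : Fin m → (Fin n → ℝ),
          (∀ i, f i ∈ ((ℓ : ℝ) • P) ∩ latticePts n) ∧ x = ∑ i, f i := by
  subst hP
  intro m hm x ⟨hx, hxL⟩
  rw [smul_smul, ← Nat.cast_mul] at hx
  induction m, hm using Nat.le_induction generalizing x with
  | base => exact ⟨fun _ => x, fun _ => ⟨by simpa using hx, hxL⟩, by simp⟩
  | succ m hm ih =>
    have hdim : Module.finrank ℝ (Fin n → ℝ) ≤ m * ℓ + 1 := by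
      rw [Module.finrank_fin_fun]
      have := Nat.le_mul_of_pos_left ℓ hm
      omega
    rw [Nat.succ_mul] at hx
    obtain ⟨g, hgS, hg⟩ := exists_sum_sub_mem_smul_convexHull_of_hollow
      (L := latticeSubgroup n) hSlat hk hdim ℓ hx hxL
    have hgL : ∑ i, g i ∈ latticeSubgroup n :=
      AddSubgroup.sum_mem _ fun i _ => hSlat (hgS i)
    obtain ⟨f, hf, hsum⟩ := ih (x - ∑ i, g i) hg (sub_mem hxL hgL)
    have hgP : ∑ i, g i ∈ (ℓ : ℝ) • convexHull ℝ (S : Set (Fin n → ℝ)) := by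
      simpa using sum_smul_mem_sum_smul_convexHull Finset.univ hS (μ := 1) (fun _ _ => zero_le_one)
        fun i _ => hgS i
    refine ⟨Fin.cons (∑ i, g i) f, Fin.cases ⟨hgP, hgL⟩ hf, ?_⟩
    rw [Fin.sum_cons, ← hsum, add_sub_cancel]

/-- Special case `k = 1` of Corollary 1.4: if `P ⊆ ℝ^n` (`n ≥ 2`) is a full-dimensional
lattice polytope whose interior contains no lattice point, then `ℓP` is normal for every
`ℓ ≥ n - 1`. -/
theorem dilate_is_normal_of_no_interior_lattice_point
    (n : ℕ) (hn : 2 ≤ n)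
    (S : Finset (Fin n → ℝ)) (hS : S.Nonempty)
    (hSlat : (S : Set (Fin n → ℝ)) ⊆ latticePts n)
    (P : Set (Fin n → ℝ)) (hP : P = convexHull ℝ (S : Set (Fin n → ℝ)))
    (hPfull : (interior P).Nonempty)
    (hk : ∀ x ∈ interior P, x ∉ latticePts n)
    (ℓ : ℕ) (hℓ : n - 1 ≤ ℓ) :
    ∀ m : ℕ, 1 ≤ m →
      ∀ x ∈ ((m : ℝ) • ((ℓ : ℝ) • P)) ∩ latticePts n,
        ∃ f : Fin m → (Fin n → ℝ),
          (∀ i, f i ∈ ((ℓ : ℝ) • P) ∩ latticePts n) ∧ x = ∑ i, f i :=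
  dilate_is_normal_of_no_interior_lattice_point_general n S hS hSlat P hP hk ℓ hℓ
end
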